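/- arXiv:2311.12017 — 2 statements merged into one kernel-verified Lean document; each statement's English description precedes it below -/
import Mathlib

section
/- Fix integers n ≥ 1 and 1 ≤ m₀ ≤ n, and arbitrary (deterministic) functions f_m : {0,1}^m → {0,1}^m for m₀ ≤ m ≤ n; define r := r^{m₀} by the downward recursion r^{n+1} = id and r^m(x) = r^{m+1}(f_m(MSB_m(x)) ‖ LSB_{n−m}(x)). Then for every cut position c with m₀ ≤ c ≤ n and every function h : {0,1}^n → {0,1}, the 2^c × 2^{n−c} matrix T with entries T_{ij} = (−1)^{h(r(i‖j))} (for i ∈ {0,1}^c, j ∈ {0,1}^{n−c}) has at most |range(f_c)| distinct rows; in particular its rank over ℝ is at most |range(f_c)|. -/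
open scoped BigOperators Classical
open Matrix

/-- The `m` most significant bits of an `n`-bit string (index `0` is most significant). -/
def msb {n : ℕ} (m : ℕ) (h : m ≤ n) (x : Fin n → Bool) : Fin m → Bool :=
  fun s => x ⟨s.1, lt_of_lt_of_le s.2 h⟩

/-- Replace the `m` most significant bits of `x` by `f m` applied to them,
keeping the `n - m` least significant bits: this is `f_m(MSB_m(x)) ‖ LSB_{n-m}(x)`. -/
def rStep (n : ℕ) (f : ∀ m : ℕ, (Fin m → Bool) → (Fin m → Bool)) (m : ℕ) (h : m ≤ n)
    (x : Fin n → Bool) : Fin n → Bool :=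
  fun t => if ht : (t : ℕ) < m then f m (msb m h x) ⟨t.1, ht⟩ else x t

/-- The downward recursion `r^{n+1} = id`, `r^m(x) = r^{m+1}(f_m(MSB_m(x)) ‖ LSB_{n-m}(x))`. -/
def rRec (n : ℕ) (f : ∀ m : ℕ, (Fin m → Bool) → (Fin m → Bool)) (m : ℕ)
    (x : Fin n → Bool) : Fin n → Bool :=
  if h : m ≤ n then rRec n f (m + 1) (rStep n f m h x) else x
termination_by n + 1 - m
decreasing_by omega

/-- Concatenation `i ‖ j` of a `c`-bit string (most significant part) with an
`(n - c)`-bit string (least significant part) into an `n`-bit string. -/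
def concatAt {n : ℕ} (c : ℕ) (i : Fin c → Bool) (j : Fin (n - c) → Bool) : Fin n → Bool :=
  fun t => if ht : (t : ℕ) < c then i ⟨t.1, ht⟩
    else if ht2 : (t : ℕ) - c < n - c then j ⟨t.1 - c, ht2⟩ else false

/-! The first `c - m₀ + 1` steps of the recursion only touch the top `c` bits, and on them
they act as the `c`-bit recursion `rRec c f m₀`, whose last step applies `f c`. Hence
`r(i ‖ j) = r^{c+1}(p ‖ j)` with `p = rRec c f m₀ i ∈ range f_c` independent of `j`: row `i`
of `T` depends only on `p`. The rank is at most the number of distinct rows. -/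

section Recursion

variable {n : ℕ} (f : ∀ m : ℕ, (Fin m → Bool) → (Fin m → Bool))

theorem rRec_of_le {m : ℕ} (h : m ≤ n) (x : Fin n → Bool) :
    rRec n f m x = rRec n f (m + 1) (rStep n f m h x) := by
  rw [rRec, dif_pos h]

theorem rRec_of_lt {m : ℕ} (h : n < m) (x : Fin n → Bool) : rRec n f m x = x := by
  rw [rRec, dif_neg (by omega)]

theorem rRec_mem_range_of_le {m : ℕ} (hmn : m ≤ n) (x : Fin n → Bool) :
    rRec n f m x ∈ Set.range (f n) := by
  induction hmn using Nat.decreasingInduction generalizing x with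
  | self =>
    rw [rRec_of_le f le_rfl, rRec_of_lt f n.lt_succ_self]
    exact ⟨msb n le_rfl x, funext fun t => by simp [rStep, t.2]⟩
  | of_succ k hk ih =>
    rw [rRec_of_le f hk.le]
    exact ih _

variable {c m : ℕ} (hcn : c ≤ n) (i : Fin c → Bool) (j : Fin (n - c) → Bool)
include hcn

theorem msb_concatAt (hmc : m ≤ c) : msb m (hmc.trans hcn) (concatAt c i j) = msb m hmc i := by
  funext s
  simp [msb, concatAt, lt_of_lt_of_le s.2 hmc]

theorem rStep_concatAt (hmc : m ≤ c) :
    rStep n f m (hmc.trans hcn) (concatAt c i j) = concatAt c (rStep c f m hmc i) j := by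
  funext t
  by_cases htm : (t : ℕ) < m
  · simp [rStep, concatAt, htm, lt_of_lt_of_le htm hmc, msb_concatAt hcn i j hmc]
  · by_cases htc : (t : ℕ) < c <;> simp [rStep, concatAt, htm, htc]

theorem rRec_concatAt (hmc : m ≤ c) :
    rRec n f m (concatAt c i j) = rRec n f (c + 1) (concatAt c (rRec c f m i) j) := by
  induction hmc using Nat.decreasingInduction generalizing i with
  | self =>
    rw [rRec_of_le f hcn, rStep_concatAt f hcn i j le_rfl, rRec_of_le f le_rfl,
      rRec_of_lt f c.lt_succ_self]
  | of_succ k hk ih =>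
    rw [rRec_of_le f (hk.le.trans hcn), rStep_concatAt f hcn i j hk.le, ih, ← rRec_of_le f hk.le]

end Recursion

theorem Matrix.rank_le_card_image_row {m n R : Type*} [Fintype m] [Fintype n] [Field R]
    [DecidableEq (n → R)]
    (A : Matrix m n R) : A.rank ≤ (Finset.univ.image fun i => A i).card := by
  have hrows : Set.range A.row = Finset.univ.image fun i => A i := by
    rw [Finset.coe_image, Finset.coe_univ, Set.image_univ]
    rfl
  rw [A.rank_eq_finrank_span_row, hrows]
  exact finrank_span_finset_le_card _

theorem statement3_general
    (n m₀ : ℕ)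
    (f : ∀ m : ℕ, (Fin m → Bool) → (Fin m → Bool))
    (c : ℕ) (hc1 : m₀ ≤ c) (hc2 : c ≤ n)
    (h : (Fin n → Bool) → Bool)
    (T : Matrix (Fin c → Bool) (Fin (n - c) → Bool) ℝ)
    (hT : ∀ i j, T i j = if h (rRec n f m₀ (concatAt c i j)) then (-1 : ℝ) else 1) :
    (Finset.univ.image fun i : Fin c → Bool => T i).card
        ≤ (Finset.univ.image (f c)).card ∧
      T.rank ≤ (Finset.univ.image (f c)).card := by
  let rowOf (p : Fin c → Bool) (j : Fin (n - c) → Bool) : ℝ :=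
    if h (rRec n f (c + 1) (concatAt c p j)) then -1 else 1
  have hrow (i : Fin c → Bool) : T i = rowOf (rRec c f m₀ i) := by
    funext j
    rw [hT, rRec_concatAt f hc2 i j hc1]
  have hrows : (Finset.univ.image fun i => T i) ⊆ (Finset.univ.image (f c)).image rowOf := by
    intro r hr
    obtain ⟨i, -, rfl⟩ := Finset.mem_image.mp hr
    obtain ⟨y, hy⟩ := rRec_mem_range_of_le f hc1 i
    simp only [Finset.mem_image, Finset.mem_univ, true_and]
    exact ⟨_, ⟨y, hy⟩, (hrow i).symm⟩
  have hcard := (Finset.card_le_card hrows).trans Finset.card_image_le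
  exact ⟨hcard, T.rank_le_card_image_row.trans hcard⟩

/-- For the deterministic multi-cut recursion and any cut position
`m₀ ≤ c ≤ n`, the sign matrix `T_{ij} = (-1)^{h(r(i ‖ j))}` has at most `|range f_c|`
distinct rows, and in particular `rank T ≤ |range f_c|` over `ℝ`. -/
theorem statement3
    (n m₀ : ℕ) (hn : 1 ≤ n) (hm₀ : 1 ≤ m₀) (hm₀n : m₀ ≤ n)
    (f : ∀ m : ℕ, (Fin m → Bool) → (Fin m → Bool))
    (c : ℕ) (hc1 : m₀ ≤ c) (hc2 : c ≤ n)
    (h : (Fin n → Bool) → Bool)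
    (T : Matrix (Fin c → Bool) (Fin (n - c) → Bool) ℝ)
    (hT : ∀ i j, T i j = if h (rRec n f m₀ (concatAt c i j)) then (-1 : ℝ) else 1) :
    (Finset.univ.image fun i : Fin c → Bool => T i).card
        ≤ (Finset.univ.image (f c)).card ∧
      T.rank ≤ (Finset.univ.image (f c)).card :=
  statement3_general n m₀ f c hc1 hc2 h T hT
end

section
/- Fix integers n ≥ 1 and 1 ≤ m₀ ≤ n. For each m₀ ≤ m ≤ n let F_m : {0,1}^m → {0,1}^m be a pairwise independent random function, with F_{m₀},…,F_n mutually independent, and define r := r^{m₀} by the downward recursion r^{n+1} = id and r^m(x) = r^{m+1}(F_m(MSB_m(x)) ‖ LSB_{n−m}(x)). Then for every x ∈ {0,1}^n, the sum over all y ∈ {0,1}^n with y ≠ x of Pr[r(x) = r(y)] is at most n. -/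
/-
Follow two inputs `x ≠ y` through the stages `m₀, …, n`. Stage `k` rewrites only the `k` most
significant bits, so if the two runs first coincide right after stage `k`, then `x` and `y` agree
on all bits from position `k` on, while stage `k` receives two different `k`-bit strings and `F_k`
maps them to the same value. Those two strings are determined by `F_{m₀}, …, F_{k-1}`, which are
independent of `F_k`, so by pairwise independence this happens with probability at most `2^{-k}`.
Hence `Pr[r(x) = r(y)]` is at most the sum of `2^{-k}` over the stages `k` such that `x` and `y`
agree from bit `k` on. For each `k` at most `2^k` strings `y` agree with `x` from bit `k` on, so
summing over `y` costs at most `1` per stage, that is `n - m₀ + 1 ≤ n` in total.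
-/

open scoped BigOperators Classical

/-- Probability of an event under a (finite, weighted) probability mass function. -/
noncomputable def pr {Ω : Type*} [Fintype Ω] (p : Ω → ℝ) (E : Ω → Prop) : ℝ :=
  ∑ ω, if E ω then p ω else 0

/-- The `k` least significant bits of an `n`-bit string (junk `false` if `k > n`;
in all uses below `k ≤ n`). -/
def lsb {n : ℕ} (k : ℕ) (x : Fin n → Bool) : Fin k → Bool :=
  fun s => if h : n - k + (s : ℕ) < n then x ⟨n - k + s.1, h⟩ else false

open Finset

section Bits

variable {n : ℕ}

theorem eq_iff_msb_eq_and_forall_le {m : ℕ} (h : m ≤ n) {x y : Fin n → Bool} :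
    x = y ↔ msb m h x = msb m h y ∧ ∀ t : Fin n, m ≤ (t : ℕ) → x t = y t := by
  refine ⟨fun hxy => hxy ▸ ⟨rfl, fun _ _ => rfl⟩, fun ⟨hlow, hhigh⟩ => funext fun t => ?_⟩
  by_cases ht : (t : ℕ) < m
  · exact congrFun hlow ⟨t, ht⟩
  · exact hhigh t (not_lt.mp ht)

variable (f : ∀ m : ℕ, (Fin m → Bool) → (Fin m → Bool))

theorem rStep_apply_of_le {m : ℕ} (h : m ≤ n) (x : Fin n → Bool) {t : Fin n} (ht : m ≤ (t : ℕ)) :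
    rStep n f m h x t = x t := by
  simp [rStep, not_lt.mpr ht]

theorem msb_rStep {m : ℕ} (h : m ≤ n) (x : Fin n → Bool) :
    msb m h (rStep n f m h x) = f m (msb m h x) := by
  funext s
  simp [msb, rStep]

theorem rStep_eq_rStep_iff {m : ℕ} (h : m ≤ n) {x y : Fin n → Bool} :
    rStep n f m h x = rStep n f m h y ↔
      f m (msb m h x) = f m (msb m h y) ∧ ∀ t : Fin n, m ≤ (t : ℕ) → x t = y t := by
  rw [eq_iff_msb_eq_and_forall_le h, msb_rStep, msb_rStep]
  refine and_congr_right fun _ => forall_congr' fun t => imp_congr_right fun ht => ?_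
  rw [rStep_apply_of_le f h x ht, rStep_apply_of_le f h y ht]

end Bits

/-- The input to stage `k`: `x` after the stages `m₀, …, k - 1`, so that
`r^{m₀} = r^k ∘ rPartial k`. -/
def rPartial (n : ℕ) (f : ∀ m : ℕ, (Fin m → Bool) → (Fin m → Bool)) (m₀ : ℕ) :
    ℕ → (Fin n → Bool) → Fin n → Bool
  | 0, x => x
  | k + 1, x =>
    if h : m₀ ≤ k ∧ k ≤ n then rStep n f k h.2 (rPartial n f m₀ k x) else rPartial n f m₀ k x

section Partial

variable {n : ℕ} (f : ∀ m : ℕ, (Fin m → Bool) → (Fin m → Bool)) {m₀ : ℕ}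

theorem rPartial_succ_of_le {k : ℕ} (hk : m₀ ≤ k) (hkn : k ≤ n) (x : Fin n → Bool) :
    rPartial n f m₀ (k + 1) x = rStep n f k hkn (rPartial n f m₀ k x) := by
  simp [rPartial, hk, hkn]

theorem rPartial_of_le_start {k : ℕ} (hk : k ≤ m₀) (x : Fin n → Bool) :
    rPartial n f m₀ k x = x := by
  induction k with
  | zero => rfl
  | succ k ih => simp [rPartial, show ¬ m₀ ≤ k by omega, ih (by omega)]

theorem rPartial_of_le_end {k : ℕ} (hk : n + 1 ≤ k) (x : Fin n → Bool) :
    rPartial n f m₀ k x = rPartial n f m₀ (n + 1) x := by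
  induction k, hk using Nat.le_induction with
  | base => rfl
  | succ k hk ih => simp [rPartial, show ¬ k ≤ n by omega, ih]

theorem rRec_rPartial {m : ℕ} (hm : m₀ ≤ m) (x : Fin n → Bool) :
    rRec n f m (rPartial n f m₀ m x) = rPartial n f m₀ (n + 1) x := by
  induction hd : n + 1 - m generalizing m with
  | zero => rw [rRec, dif_neg (by omega), rPartial_of_le_end f (by omega)]
  | succ d ih =>
    rw [rRec, dif_pos (by omega), ← rPartial_succ_of_le f hm, ih (by omega) (by omega)]

theorem rRec_eq_rPartial (x : Fin n → Bool) : rRec n f m₀ x = rPartial n f m₀ (n + 1) x := by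
  simpa [rPartial_of_le_start f le_rfl] using rRec_rPartial f le_rfl x

theorem rPartial_apply_of_le {k : ℕ} (x : Fin n → Bool) {t : Fin n} (ht : k ≤ (t : ℕ)) :
    rPartial n f m₀ k x t = x t := by
  induction k with
  | zero => rfl
  | succ k ih =>
    by_cases h : m₀ ≤ k ∧ k ≤ n
    · rw [rPartial_succ_of_le f h.1 h.2, rStep_apply_of_le f h.2 _ (by omega), ih (by omega)]
    · simp only [rPartial, dif_neg h, ih (by omega)]

theorem rPartial_congr {g : ∀ m : ℕ, (Fin m → Bool) → (Fin m → Bool)} {k : ℕ}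
    (hfg : ∀ j, m₀ ≤ j → j < k → f j = g j) : rPartial n f m₀ k = rPartial n g m₀ k := by
  induction k with
  | zero => rfl
  | succ k ih =>
    funext x
    simp only [rPartial, ih fun j hj hjk => hfg j hj (by omega)]
    split_ifs with h
    · funext t
      simp only [rStep, hfg k h.1 (by omega)]
    · rfl

end Partial

def MergesAt (n : ℕ) (f : ∀ m : ℕ, (Fin m → Bool) → (Fin m → Bool)) (m₀ k : ℕ)
    (x y : Fin n → Bool) : Prop :=
  ∃ hk : k ≤ n, msb k hk (rPartial n f m₀ k x) ≠ msb k hk (rPartial n f m₀ k y) ∧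
    f k (msb k hk (rPartial n f m₀ k x)) = f k (msb k hk (rPartial n f m₀ k y))

theorem exists_mergesAt_of_rRec_eq {n m₀ : ℕ} (f : ∀ m : ℕ, (Fin m → Bool) → (Fin m → Bool))
    {x y : Fin n → Bool} (hxy : x ≠ y) (h : rRec n f m₀ x = rRec n f m₀ y) :
    ∃ k ∈ Icc m₀ n, (∀ t : Fin n, k ≤ (t : ℕ) → x t = y t) ∧ MergesAt n f m₀ k x y := by
  rw [rRec_eq_rPartial, rRec_eq_rPartial] at h
  obtain ⟨k, hne, heq⟩ := Nat.exists_not_and_succ_of_not_zero_of_exists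
    (p := fun k => rPartial n f m₀ k x = rPartial n f m₀ k y) hxy ⟨n + 1, h⟩
  have hk : m₀ ≤ k ∧ k ≤ n := by
    by_contra hk
    simp only [rPartial, dif_neg hk] at heq
    exact hne heq
  rw [rPartial_succ_of_le f hk.1 hk.2, rPartial_succ_of_le f hk.1 hk.2,
    rStep_eq_rStep_iff] at heq
  obtain ⟨hf, hhigh⟩ := heq
  refine ⟨k, mem_Icc.2 hk, fun t ht => ?_, hk.2,
    fun hmsb => hne ((eq_iff_msb_eq_and_forall_le hk.2).2 ⟨hmsb, hhigh⟩), hf⟩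
  simpa only [rPartial_apply_of_le f _ ht] using hhigh t ht

theorem card_filter_forall_le_eq_le_two_pow {n k : ℕ} (hk : k ≤ n) (x : Fin n → Bool)
    (s : Finset (Fin n → Bool)) :
    #(s.filter fun y => ∀ t : Fin n, k ≤ (t : ℕ) → x t = y t) ≤ 2 ^ k := by
  calc _ ≤ #(univ : Finset (Fin k → Bool)) := by
        refine card_le_card_of_injOn (msb k hk) (fun _ _ => mem_coe.2 (mem_univ _))
          fun y hy y' hy' hmsb => (eq_iff_msb_eq_and_forall_le hk).2 ⟨hmsb, fun t ht => ?_⟩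
        exact ((mem_filter.1 hy).2 t ht).symm.trans ((mem_filter.1 hy').2 t ht)
    _ = 2 ^ k := by simp

theorem sum_ite_forall_le_eq_le_one {n k : ℕ} (hk : k ≤ n) (x : Fin n → Bool)
    (s : Finset (Fin n → Bool)) :
    ∑ y ∈ s, (if ∀ t : Fin n, k ≤ (t : ℕ) → x t = y t then (1 : ℝ) / 2 ^ k else 0) ≤ 1 := by
  rw [← sum_filter, sum_const, nsmul_eq_mul]
  calc _ ≤ (2 : ℝ) ^ k * (1 / 2 ^ k) := by
        gcongr
        exact_mod_cast card_filter_forall_le_eq_le_two_pow hk x s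
    _ = 1 := by field_simp

section Probability

variable {Ω : Type*} [Fintype Ω] (p : Ω → ℝ)

theorem pr_congr {E E' : Ω → Prop} (h : ∀ ω, E ω ↔ E' ω) : pr p E = pr p E' :=
  congrArg (pr p) (funext fun ω => propext (h ω))

theorem pr_nonneg (hp0 : ∀ ω, 0 ≤ p ω) (E : Ω → Prop) : 0 ≤ pr p E :=
  sum_nonneg fun ω _ => ite_nonneg (hp0 ω) le_rfl

theorem pr_mono (hp0 : ∀ ω, 0 ≤ p ω) {E E' : Ω → Prop} (h : ∀ ω, E ω → E' ω) :
    pr p E ≤ pr p E' :=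
  sum_le_sum fun ω _ => by
    by_cases hE : E ω
    · simp [hE, h ω hE]
    · simp [hE, ite_nonneg (hp0 ω) le_rfl]

theorem pr_true (hp1 : ∑ ω, p ω = 1) : pr p (fun _ => True) = 1 := by
  simpa [pr] using hp1

theorem pr_comp_eq_sum {α : Type*} [Fintype α] (Z : Ω → α) (P : α → Prop) :
    pr p (fun ω => P (Z ω)) = ∑ a, if P a then pr p (fun ω => Z ω = a) else 0 := by
  simp only [pr]
  calc _ = ∑ ω, ∑ a, if Z ω = a then (if P a then p ω else 0) else 0 := by simp
    _ = _ := by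
      rw [sum_comm]
      refine sum_congr rfl fun a _ => ?_
      split_ifs <;> simp

theorem pr_exists_le_sum (hp0 : ∀ ω, 0 ≤ p ω) {ι : Type*} (s : Finset ι) (Q : ι → Ω → Prop) :
    pr p (fun ω => ∃ i ∈ s, Q i ω) ≤ ∑ i ∈ s, pr p (Q i) := by
  simp only [pr]
  rw [sum_comm]
  refine sum_le_sum fun ω _ => ?_
  split_ifs with h
  · obtain ⟨i, hi, hQ⟩ := h
    calc p ω = if Q i ω then p ω else 0 := (if_pos hQ).symm
      _ ≤ _ := single_le_sum (f := fun j => if Q j ω then p ω else 0)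
          (fun j _ => ite_nonneg (hp0 ω) le_rfl) hi
  · exact sum_nonneg fun j _ => ite_nonneg (hp0 ω) le_rfl

theorem pr_eq_sum_mul_of_factor {α γ : Type*} [Fintype α] [Fintype γ] (X : Ω → α) (Y : Ω → γ)
    (u : α → ℝ)
    (hXY : ∀ a b, pr p (fun ω => X ω = a ∧ Y ω = b) = u a * pr p (fun ω => Y ω = b))
    (C : α → γ → Prop) :
    pr p (fun ω => C (X ω) (Y ω)) = ∑ a, u a * pr p (fun ω => C a (Y ω)) := by
  refine (pr_comp_eq_sum p (fun ω => (X ω, Y ω)) fun z => C z.1 z.2).trans ?_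
  rw [Fintype.sum_prod_type]
  refine sum_congr rfl fun a _ => ?_
  rw [pr_comp_eq_sum, mul_sum]
  refine sum_congr rfl fun b _ => ?_
  simp only [Prod.mk.injEq, hXY, mul_ite, mul_zero]

theorem pr_eq_eq_card_mul_of_pair {γ : Type*} [Fintype γ] (Y₁ Y₂ : Ω → γ) (c : ℝ)
    (h : ∀ a b, pr p (fun ω => Y₁ ω = a ∧ Y₂ ω = b) = c) :
    pr p (fun ω => Y₁ ω = Y₂ ω) = Fintype.card γ * c := by
  refine (pr_comp_eq_sum p (fun ω => (Y₁ ω, Y₂ ω)) fun z => z.1 = z.2).trans ?_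
  simp [Fintype.sum_prod_type, h]

end Probability

section Independence

variable {Ω : Type*} [Fintype Ω] (p : Ω → ℝ) {ι : Type*} [DecidableEq ι] {β : ι → Type*}

def MutuallyIndep (F : ∀ i, Ω → β i) (I : Finset ι) : Prop :=
  ∀ g : ∀ i, β i, pr p (fun ω => ∀ i ∈ I, F i ω = g i) = ∏ i ∈ I, pr p (fun ω => F i ω = g i)

variable (F : ∀ i, Ω → β i) {I : Finset ι} {m : ι}

theorem pr_restrict_erase_and_eq [∀ i, Inhabited (β i)] (hInd : MutuallyIndep p F I)
    (hm : m ∈ I) (h : ∀ i : I.erase m, β i) (b : β m) :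
    pr p (fun ω => (fun i : I.erase m => F i ω) = h ∧ F m ω = b) =
      (∏ i : I.erase m, pr p (fun ω => F i ω = h i)) * pr p (fun ω => F m ω = b) := by
  set g : ∀ i, β i :=
    Function.update (fun i => if hi : i ∈ I.erase m then h ⟨i, hi⟩ else default) m b
  have hgm : g m = b := Function.update_self _ _ _
  have hgi : ∀ i : I.erase m, g i = h i := fun i => by
    simp only [g, Function.update_of_ne (ne_of_mem_erase i.2), dif_pos i.2]
  have hiff : ∀ ω, ((fun i : I.erase m => F i ω) = h ∧ F m ω = b) ↔ ∀ i ∈ I, F i ω = g i := by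
    intro ω
    constructor
    · rintro ⟨rfl, rfl⟩ i hi
      by_cases him : i = m
      · subst him
        exact hgm.symm
      · exact (hgi ⟨i, mem_erase.2 ⟨him, hi⟩⟩).symm
    · intro hall
      exact ⟨funext fun i => (hall i (mem_of_mem_erase i.2)).trans (hgi i), (hall m hm).trans hgm⟩
  rw [pr_congr p hiff, hInd g, ← mul_prod_erase I _ hm, hgm, mul_comm, ← prod_coe_sort]
  simp only [hgi]

theorem pr_le_of_mutuallyIndep [∀ i, Fintype (β i)] [∀ i, Inhabited (β i)]
    (hp0 : ∀ ω, 0 ≤ p ω) (hp1 : ∑ ω, p ω = 1) (hInd : MutuallyIndep p F I) (hm : m ∈ I)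
    (C : (∀ i : I.erase m, β i) → β m → Prop) (c : ℝ)
    (hc : ∀ h, pr p (fun ω => C h (F m ω)) ≤ c) :
    pr p (fun ω => C (fun i => F i ω) (F m ω)) ≤ c := by
  set u : (∀ i : I.erase m, β i) → ℝ := fun h => ∏ i : I.erase m, pr p (fun ω => F i ω = h i)
  have hfac := pr_eq_sum_mul_of_factor p (fun ω (i : I.erase m) => F i ω) (F m) u
    (pr_restrict_erase_and_eq p F hInd hm)
  have hu : ∑ h, u h = 1 := by simpa [pr_true p hp1] using (hfac fun _ _ => True).symm
  rw [hfac C]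
  calc ∑ h, u h * pr p (fun ω => C h (F m ω)) ≤ ∑ h, u h * c :=
        sum_le_sum fun h _ => mul_le_mul_of_nonneg_left (hc h)
          (prod_nonneg fun i _ => pr_nonneg p hp0 _)
    _ = c := by rw [← sum_mul, hu, one_mul]

end Independence

theorem pr_mergesAt_le {Ω : Type*} [Fintype Ω] (p : Ω → ℝ) (hp0 : ∀ ω, 0 ≤ p ω)
    (hp1 : ∑ ω, p ω = 1) {n m₀ k : ℕ} (F : ∀ m : ℕ, Ω → (Fin m → Bool) → (Fin m → Bool))
    (hFpair : ∀ u v : Fin k → Bool, u ≠ v → ∀ a b : Fin k → Bool,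
      pr p (fun ω => F k ω u = a ∧ F k ω v = b) = ((1 : ℝ) / 2 ^ k) ^ 2)
    (hInd : MutuallyIndep p F (Icc m₀ n)) (hk : k ∈ Icc m₀ n) (x y : Fin n → Bool) :
    pr p (fun ω => MergesAt n (fun j => F j ω) m₀ k x y) ≤ 1 / 2 ^ k := by
  have hkn := (mem_Icc.1 hk).2
  -- The inputs to stage `k` depend only on the maps of the earlier stages, which are
  -- coordinates other than `k`.
  let extend (h : ∀ j : (Icc m₀ n).erase k, (Fin j → Bool) → (Fin j → Bool)) (j : ℕ) :
      (Fin j → Bool) → (Fin j → Bool) :=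
    if hj : j ∈ (Icc m₀ n).erase k then h ⟨j, hj⟩ else id
  let input (h : ∀ j : (Icc m₀ n).erase k, (Fin j → Bool) → (Fin j → Bool)) (z : Fin n → Bool) :
      Fin k → Bool :=
    msb k hkn (rPartial n (extend h) m₀ k z)
  have h_input : ∀ ω z, input (fun j => F j ω) z =
      msb k hkn (rPartial n (fun j => F j ω) m₀ k z) := fun ω z => by
    simp only [input]
    rw [rPartial_congr _ fun j hj hjk => ?_]
    simp [extend, hj, hjk.ne, hjk.le.trans hkn]
  have hevent : ∀ ω, MergesAt n (fun j => F j ω) m₀ k x y ↔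
      input (fun j => F j ω) x ≠ input (fun j => F j ω) y ∧
        F k ω (input (fun j => F j ω) x) = F k ω (input (fun j => F j ω) y) := by
    intro ω
    simp only [MergesAt, h_input, exists_prop_of_true hkn]
  rw [pr_congr p hevent]
  refine pr_le_of_mutuallyIndep p F hp0 hp1 hInd hk
    (fun h g => input h x ≠ input h y ∧ g (input h x) = g (input h y)) _ fun h => ?_
  by_cases hxy : input h x = input h y
  · simp [hxy, pr]
  · rw [pr_congr p (E' := fun ω => F k ω (input h x) = F k ω (input h y)) (by simp [hxy]),
      pr_eq_eq_card_mul_of_pair p _ _ _ (hFpair _ _ hxy)]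
    refine le_of_eq ?_
    rw [Fintype.card_fun, Fintype.card_bool, Fintype.card_fin]
    push_cast
    field_simp

theorem pr_rRec_eq_le {Ω : Type*} [Fintype Ω] (p : Ω → ℝ) (hp0 : ∀ ω, 0 ≤ p ω)
    (hp1 : ∑ ω, p ω = 1) {n m₀ : ℕ} (F : ∀ m : ℕ, Ω → (Fin m → Bool) → (Fin m → Bool))
    (hFpair : ∀ m, m₀ ≤ m → m ≤ n → ∀ x y : Fin m → Bool, x ≠ y →
      ∀ a b : Fin m → Bool,
        pr p (fun ω => F m ω x = a ∧ F m ω y = b) = ((1 : ℝ) / 2 ^ m) ^ 2)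
    (hInd : MutuallyIndep p F (Icc m₀ n)) {x y : Fin n → Bool} (hxy : x ≠ y) :
    pr p (fun ω => rRec n (fun m => F m ω) m₀ x = rRec n (fun m => F m ω) m₀ y) ≤
      ∑ k ∈ Icc m₀ n, if ∀ t : Fin n, k ≤ (t : ℕ) → x t = y t then (1 : ℝ) / 2 ^ k else 0 := by
  rw [← sum_filter]
  calc _ ≤ pr p (fun ω => ∃ k ∈ (Icc m₀ n).filter fun k => ∀ t : Fin n, k ≤ (t : ℕ) → x t = y t,
          MergesAt n (fun m => F m ω) m₀ k x y) :=
        pr_mono p hp0 fun ω h => by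
          obtain ⟨k, hk, hagree, hmerge⟩ := exists_mergesAt_of_rRec_eq _ hxy h
          exact ⟨k, mem_filter.2 ⟨hk, hagree⟩, hmerge⟩
    _ ≤ _ := pr_exists_le_sum p hp0 _ _
    _ ≤ _ := sum_le_sum fun k hk => by
        have hk' := (mem_filter.1 hk).1
        exact pr_mergesAt_le p hp0 hp1 F (hFpair k (mem_Icc.1 hk').1 (mem_Icc.1 hk').2) hInd hk' x y

theorem statement7_general
    (n m₀ : ℕ) (hm₀ : 1 ≤ m₀)
    (Ω : Type*) [Fintype Ω] (p : Ω → ℝ)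
    (hp0 : ∀ ω, 0 ≤ p ω) (hp1 : ∑ ω, p ω = 1)
    (F : ∀ m : ℕ, Ω → (Fin m → Bool) → (Fin m → Bool))
    -- each `F m` (for `m₀ ≤ m ≤ n`) is a pairwise independent random function
    (hFpair : ∀ m, m₀ ≤ m → m ≤ n → ∀ x y : Fin m → Bool, x ≠ y →
      ∀ a b : Fin m → Bool,
        pr p (fun ω => F m ω x = a ∧ F m ω y = b) = ((1 : ℝ) / 2 ^ m) ^ 2)
    -- `F_{m₀}, …, F_n` are mutually independent
    (hInd : ∀ g : ∀ m : ℕ, (Fin m → Bool) → (Fin m → Bool),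
      pr p (fun ω => ∀ m ∈ Finset.Icc m₀ n, F m ω = g m)
        = ∏ m ∈ Finset.Icc m₀ n, pr p (fun ω => F m ω = g m))
    (x : Fin n → Bool) :
    ∑ y ∈ Finset.univ.filter (fun y : Fin n → Bool => y ≠ x),
        pr p (fun ω => rRec n (fun m => F m ω) m₀ x = rRec n (fun m => F m ω) m₀ y)
      ≤ (n : ℝ) := by
  calc _ ≤ ∑ y ∈ univ.filter (fun y : Fin n → Bool => y ≠ x), ∑ k ∈ Icc m₀ n,
          if ∀ t : Fin n, k ≤ (t : ℕ) → x t = y t then (1 : ℝ) / 2 ^ k else 0 :=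
        sum_le_sum fun y hy => pr_rRec_eq_le p hp0 hp1 F hFpair hInd (mem_filter.1 hy).2.symm
    _ ≤ ∑ k ∈ Icc m₀ n, (1 : ℝ) := by
        rw [sum_comm]
        exact sum_le_sum fun k hk => sum_ite_forall_le_eq_le_one (mem_Icc.1 hk).2 x _
    _ ≤ n := by
        rw [sum_const, Nat.card_Icc, nsmul_one]
        exact_mod_cast (by omega : n + 1 - m₀ ≤ n)

/-- For every `x`, the sum over all `y ≠ x` of the collision
probability `Pr[r(x) = r(y)]` of the multi-cut labelling map is at most `n`. -/
theorem statement7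
    (n m₀ : ℕ) (hn : 1 ≤ n) (hm₀ : 1 ≤ m₀) (hm₀n : m₀ ≤ n)
    (Ω : Type*) [Fintype Ω] (p : Ω → ℝ)
    (hp0 : ∀ ω, 0 ≤ p ω) (hp1 : ∑ ω, p ω = 1)
    (F : ∀ m : ℕ, Ω → (Fin m → Bool) → (Fin m → Bool))
    -- each `F m` (for `m₀ ≤ m ≤ n`) is a pairwise independent random function
    (hFpair : ∀ m, m₀ ≤ m → m ≤ n → ∀ x y : Fin m → Bool, x ≠ y →
      ∀ a b : Fin m → Bool,
        pr p (fun ω => F m ω x = a ∧ F m ω y = b) = ((1 : ℝ) / 2 ^ m) ^ 2)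
    -- `F_{m₀}, …, F_n` are mutually independent
    (hInd : ∀ g : ∀ m : ℕ, (Fin m → Bool) → (Fin m → Bool),
      pr p (fun ω => ∀ m ∈ Finset.Icc m₀ n, F m ω = g m)
        = ∏ m ∈ Finset.Icc m₀ n, pr p (fun ω => F m ω = g m))
    (x : Fin n → Bool) :
    ∑ y ∈ Finset.univ.filter (fun y : Fin n → Bool => y ≠ x),
        pr p (fun ω => rRec n (fun m => F m ω) m₀ x = rRec n (fun m => F m ω) m₀ y)
      ≤ (n : ℝ) :=
  statement7_general n m₀ hm₀ Ω p hp0 hp1 F hFpair hInd x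
end
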